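/- If R = D·V with V invertible upper triangular and R column-reduced, then the multiset of pivot pairs {(low(j), j) : R[·,j] ≠ 0} together with the unpaired indices determines the persistence diagram, and rank of the submatrix D[{i,...,n}, {1,...,j}] equals the number of pivots (i', j') with i' ≥ i and j' ≤ j. -/

import Mathlib

/-!
Right multiplication by an invertible upper triangular `V` only adds to each column multiples of
earlier columns, so restricting to the first `j` columns commutes with it and the lower-left
submatrices of `D` and of `R = D * V` have the same rank. The lower-left submatrix of `R` is again
reduced, with exactly the pivots of `R` in that region, and the pivot columns of a reduced matrix
form a basis of its column space: a vanishing combination of them, evaluated at the bottom-most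
pivot row among the columns it involves, forces that column's coefficient to be zero.
-/

/-- `IsLow R i j` : entry `(i,j)` is the lowest nonzero entry (pivot) of column `j`. -/
def IsLow {F : Type*} [Field F] {n : ℕ} (R : Matrix (Fin n) (Fin n) F)
    (i j : Fin n) : Prop :=
  R i j ≠ 0 ∧ ∀ i' : Fin n, i < i' → R i' j = 0

open Matrix Finset

section Pivots

variable {F m ι : Type*} [Field F] [LinearOrder m]

/-- `IsLow` for rectangular matrices, such as lower-left submatrices, whose indices are subtypes. -/
def IsPivot (S : Matrix m ι F) (a : m) (b : ι) : Prop :=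
  S a b ≠ 0 ∧ ∀ a', a < a' → S a' b = 0

theorem exists_isPivot_of_ne_zero [Fintype m] {S : Matrix m ι F} {a₀ : m} {b : ι}
    (h : S a₀ b ≠ 0) : ∃ a, IsPivot S a b := by
  classical
  obtain ⟨a, ha, hmax⟩ :=
    (univ.filter fun a => S a b ≠ 0).exists_max_image id ⟨a₀, by simpa using h⟩
  refine ⟨a, (mem_filter.1 ha).2, fun a' hlt => ?_⟩
  by_contra h'
  exact (hmax a' (by simpa using h')).not_gt hlt

theorem linearIndependent_of_pivots {κ : Type*} {v : κ → m → F} (f : κ → m)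
    (hf : Function.Injective f) (hpiv : ∀ k, v k (f k) ≠ 0)
    (hbelow : ∀ k a, f k < a → v k a = 0) : LinearIndependent F v := by
  classical
  rw [linearIndependent_iff']
  intro s c hsum k₀ hk₀
  by_contra hc₀
  obtain ⟨k, hk, hmax⟩ :=
    (s.filter fun k => c k ≠ 0).exists_max_image f ⟨k₀, mem_filter.2 ⟨hk₀, hc₀⟩⟩
  obtain ⟨hks, hck⟩ := mem_filter.1 hk
  have hrow : ∑ k' ∈ s, c k' * v k' (f k) = c k * v k (f k) := by
    refine sum_eq_single_of_mem k hks fun k' hk' hne => ?_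
    by_cases hc' : c k' = 0
    · rw [hc', zero_mul]
    · have hlt : f k' < f k :=
        (hmax k' (mem_filter.2 ⟨hk', hc'⟩)).lt_of_ne (hf.ne hne)
      rw [hbelow k' (f k) hlt, mul_zero]
  have hzero := congrFun hsum (f k)
  simp only [Finset.sum_apply, Pi.smul_apply, smul_eq_mul, Pi.zero_apply, hrow] at hzero
  exact mul_ne_zero hck (hpiv k) hzero

theorem rank_eq_card_isPivot [Fintype m] [Fintype ι] (S : Matrix m ι F)
    (hred : ∀ a b b', IsPivot S a b → IsPivot S a b' → b = b') :
    S.rank = Nat.card {p : m × ι // IsPivot S p.1 p.2} := by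
  classical
  set v : {p : m × ι // IsPivot S p.1 p.2} → m → F := fun p => S.col p.1.2
  have hli : LinearIndependent F v :=
    linearIndependent_of_pivots (fun p => p.1.1)
      (fun p q (h : p.1.1 = q.1.1) => Subtype.ext (Prod.ext h (hred _ _ _ p.2 (h ▸ q.2))))
      (fun p => p.2.1) (fun p => p.2.2)
  have hspan : Submodule.span F (Set.range S.col) = Submodule.span F (Set.range v) := by
    refine le_antisymm ?_ (Submodule.span_mono fun _ ⟨p, hp⟩ => ⟨p.1.2, hp⟩)
    rw [← Submodule.span_insert_zero (s := Set.range v)]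
    refine Submodule.span_mono ?_
    rintro _ ⟨b, rfl⟩
    by_cases hb : S.col b = 0
    · exact Or.inl hb
    · obtain ⟨a₀, ha₀⟩ := Function.ne_iff.1 hb
      obtain ⟨a, ha⟩ := exists_isPivot_of_ne_zero (S := S) ha₀
      exact Or.inr ⟨⟨(a, b), ha⟩, rfl⟩
  rw [rank_eq_finrank_span_cols, hspan, finrank_span_eq_card hli, Nat.card_eq_fintype_card]

variable [LinearOrder ι]

theorem isPivot_lowerLeft_iff (R : Matrix m ι F) (i : m) (j : ι)
    (a : {a // i ≤ a}) (b : {b // b ≤ j}) :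
    IsPivot (R.submatrix Subtype.val Subtype.val) a b ↔ IsPivot R a b :=
  and_congr_right' ⟨fun h a' hlt => h ⟨a', a.2.trans hlt.le⟩ hlt, fun h a' hlt => h a' hlt⟩

theorem card_isPivot_lowerLeft (R : Matrix m ι F) (i : m) (j : ι) :
    Nat.card {p : {a // i ≤ a} × {b // b ≤ j} //
        IsPivot (R.submatrix Subtype.val Subtype.val) p.1 p.2} =
      Nat.card {p : m × ι // IsPivot R p.1 p.2 ∧ i ≤ p.1 ∧ p.2 ≤ j} :=
  Nat.card_congr
    { toFun := fun p => ⟨(p.1.1, p.1.2), (isPivot_lowerLeft_iff R i j _ _).1 p.2,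
        p.1.1.2, p.1.2.2⟩
      invFun := fun p => ⟨(⟨p.1.1, p.2.2.1⟩, ⟨p.1.2, p.2.2.2⟩),
        (isPivot_lowerLeft_iff R i j _ _).2 p.2.1⟩
      left_inv := fun _ => rfl
      right_inv := fun _ => rfl }

end Pivots

section UpperTriangular

variable {K α : Type*} [CommRing K] [Fintype α] [LinearOrder α] {V : Matrix α α K}

theorem Matrix.IsUpperTriangular.isUnit_diag_of_isUnit_det (hV : V.IsUpperTriangular)
    (hdet : IsUnit V.det) (k : α) : IsUnit (V k k) := by
  rw [det_of_isUpperTriangular hV] at hdet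
  exact IsUnit.prod_univ_iff.1 hdet k

theorem submatrix_mul_of_isUpperTriangular {m m' : Type*} (hV : V.IsUpperTriangular)
    (D : Matrix m α K) (r : m' → m) (j : α) :
    (D * V).submatrix r (Subtype.val : {b // b ≤ j} → α) =
      D.submatrix r (Subtype.val : {b // b ≤ j} → α) *
        V.submatrix (Subtype.val : {b // b ≤ j} → α) Subtype.val := by
  ext a b
  simp only [submatrix_apply, mul_apply]
  rw [← Fintype.sum_subtype_add_sum_subtype (· ≤ j), add_eq_left]
  exact sum_eq_zero fun k _ => by
    rw [hV (b.2.trans_lt (not_le.1 k.2)), mul_zero]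

theorem rank_lowerLeft_mul_of_isUpperTriangular {m m' : Type*} [Fintype m']
    (hV : V.IsUpperTriangular) (hdet : IsUnit V.det) (D : Matrix m α K) (r : m' → m) (j : α) :
    ((D * V).submatrix r (Subtype.val : {b // b ≤ j} → α)).rank =
      (D.submatrix r (Subtype.val : {b // b ≤ j} → α)).rank := by
  have hVj : (V.submatrix (Subtype.val : {b // b ≤ j} → α) Subtype.val).IsUpperTriangular :=
    hV.submatrix
  have hsub : IsUnit (V.submatrix (Subtype.val : {b // b ≤ j} → α) Subtype.val).det := by
    rw [det_of_isUpperTriangular hVj]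
    exact IsUnit.prod_univ_iff.2 fun k => hV.isUnit_diag_of_isUnit_det hdet k
  rw [submatrix_mul_of_isUpperTriangular hV, rank_mul_eq_left_of_isUnit_det _ _ hsub]

end UpperTriangular

/-- Lower-left rank characterization of persistence pairings: if `R = D·V`
with `V` invertible upper triangular and `R` column-reduced, then the rank of
the lower-left submatrix `D[{i,…,n},{1,…,j}]` equals the number of pivot pairs
`(i', j')` of `R` with `i' ≥ i` and `j' ≤ j`. -/
theorem stmt_16 {F : Type*} [Field F] {n : ℕ}
    (D V R : Matrix (Fin n) (Fin n) F)
    (hVu : ∀ i j : Fin n, j < i → V i j = 0)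
    (hV : IsUnit V.det) (hR : R = D * V)
    (hred : ∀ (j j' i : Fin n), IsLow R i j → IsLow R i j' → j = j') :
    ∀ i j : Fin n,
      (D.submatrix (fun a : {a : Fin n // i ≤ a} => (a : Fin n))
          (fun b : {b : Fin n // b ≤ j} => (b : Fin n))).rank =
        Nat.card {p : Fin n × Fin n //
          IsLow R p.1 p.2 ∧ i ≤ p.1 ∧ p.2 ≤ j} := by
  intro i j
  have hVupper : V.IsUpperTriangular := fun a b => hVu a b
  have hred_lowerLeft (a : {a // i ≤ a}) (b b' : {b // b ≤ j}) :
      IsPivot (R.submatrix Subtype.val Subtype.val) a b →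
        IsPivot (R.submatrix Subtype.val Subtype.val) a b' → b = b' := by
    rw [isPivot_lowerLeft_iff, isPivot_lowerLeft_iff]
    exact fun hb hb' => Subtype.ext (hred _ _ _ hb hb')
  rw [← rank_lowerLeft_mul_of_isUpperTriangular hVupper hV D _ j, ← hR]
  exact (rank_eq_card_isPivot _ hred_lowerLeft).trans (card_isPivot_lowerLeft R i j)
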